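/- arXiv:1912.05250 — 2 statements merged into one kernel-verified Lean document; each statement's English description precedes it below -/
import Mathlib

section
/- Let α = 1/√(n−1), n ≥ 3, and suppose Q : (0,∞) → ℝ is differentiable with Q' = α − Q·((X−α)² + 1 − α²) for a function X satisfying 0 < X(s) < α for all s > 0, and lim_{s→0⁺} Q(s) = 1/((n−2)α). Then Q(s) < 1/((n−2)α) for all s > 0. -/
/-!
Put `B = 1/((n-2)α)`. Since `α² = 1/(n-1)`, one has `B (1 - α²) = α`, so
`Q' = (B - Q)(1 - α²) - Q (X - α)²`, which is negative wherever `Q ≥ B` because `X ≠ α`.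
If `Q(s) ≥ B` for some `s > 0`, then `Q > B` somewhere in `(0, s)`, and since `Q → B` at `0⁺`, `Q`
has a maximum `> B` on some compact `[t, s₁] ⊆ (0, s)`, attained at `r > t`. But `Q'(r) < 0`, so
`Q` is even larger just to the left of `r`.
-/

open Filter Set Topology

lemma exists_lt_of_hasDerivAt_neg_left {f : ℝ → ℝ} {f' x a : ℝ} (hf : HasDerivAt f f' x)
    (hf' : f' < 0) (ha : a < x) : ∃ y ∈ Ioo a x, f x < f y := by
  have hslope : ∀ᶠ y in 𝓝[<] x, slope f x y < 0 :=
    (hasDerivAt_iff_tendsto_slope_left_right.mp hf).1.eventually (gt_mem_nhds hf')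
  obtain ⟨y, hy, hyI⟩ := (hslope.and (Ioo_mem_nhdsLT ha)).exists
  refine ⟨y, hyI, ?_⟩
  rw [slope_def_field, div_lt_iff_of_neg (sub_neg.mpr hyI.2)] at hy
  linarith

theorem lt_of_tendsto_nhdsGT_of_hasDerivAt_neg {f f' : ℝ → ℝ} {a c : ℝ}
    (hf : ∀ x > a, HasDerivAt f (f' x) x) (hf' : ∀ x > a, c ≤ f x → f' x < 0)
    (hlim : Tendsto f (𝓝[>] a) (𝓝 c)) : ∀ x > a, f x < c := by
  intro s hs
  by_contra! hcs
  obtain ⟨s₁, ⟨has₁, hs₁s⟩, hfs₁⟩ :=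
    exists_lt_of_hasDerivAt_neg_left (hf s hs) (hf' s hs hcs) hs
  obtain ⟨t, hft, hat, hts₁⟩ : ∃ t, f t < f s₁ ∧ t ∈ Ioo a s₁ :=
    ((hlim.eventually (gt_mem_nhds (hcs.trans_lt hfs₁))).and (Ioo_mem_nhdsGT has₁)).exists
  have hcont : ContinuousOn f (Icc t s₁) := fun x hx =>
    (hf x (hat.trans_le hx.1)).continuousAt.continuousWithinAt
  obtain ⟨r, ⟨htr, hrs₁⟩, hmax⟩ :=
    isCompact_Icc.exists_isMaxOn (nonempty_Icc.mpr hts₁.le) hcont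
  have hfr : f s₁ ≤ f r := hmax ⟨hts₁.le, le_rfl⟩
  have htr' : t < r := htr.lt_of_ne (by rintro rfl; linarith)
  have har : a < r := hat.trans htr'
  obtain ⟨y, ⟨hty, hyr⟩, hfy⟩ :=
    exists_lt_of_hasDerivAt_neg_left (hf r har) (hf' r har (by linarith)) htr'
  exact (hmax ⟨hty.le, hyr.le.trans hrs₁⟩).not_gt hfy

lemma one_div_mul_one_sub_sq {r α : ℝ} (hα : α ^ 2 * (r - 1) = 1) (hr : r ≠ 2) :
    1 / ((r - 2) * α) * (1 - α ^ 2) = α := by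
  have hα0 : α ≠ 0 := by rintro rfl; simp at hα
  have hr2 : r - 2 ≠ 0 := sub_ne_zero.mpr hr
  field_simp
  linear_combination -hα

lemma sub_mul_sq_add_one_sub_sq_neg {α B q x : ℝ} (hB : 0 < B) (hBα : B * (1 - α ^ 2) = α)
    (hα : α ^ 2 ≤ 1) (hq : B ≤ q) (hx : x ≠ α) :
    α - q * ((x - α) ^ 2 + 1 - α ^ 2) < 0 := by
  have hsplit :
      α - q * ((x - α) ^ 2 + 1 - α ^ 2) = (B - q) * (1 - α ^ 2) - q * (x - α) ^ 2 := by
    linear_combination -hBα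
  rw [hsplit]
  have hq_sq : 0 < q * (x - α) ^ 2 :=
    mul_pos (hB.trans_le hq) (sq_pos_of_ne_zero (sub_ne_zero.mpr hx))
  nlinarith [mul_nonneg (sub_nonneg.mpr hq) (sub_nonneg.mpr hα)]

/-- Barrier argument: Q stays strictly below 1/((n−2)α). -/
theorem bryant_Q_barrier (n : ℕ) (hn : 3 ≤ n) (α : ℝ) (hα : α = 1 / Real.sqrt (n - 1 : ℝ))
    (Q X : ℝ → ℝ)
    (hQ' : ∀ s > 0, HasDerivAt Q (α - Q s * ((X s - α) ^ 2 + 1 - α ^ 2)) s)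
    (hX : ∀ s > 0, 0 < X s ∧ X s < α)
    (hlim : Filter.Tendsto Q (nhdsWithin 0 (Set.Ioi 0))
      (nhds (1 / ((n - 2 : ℝ) * α)))) :
    ∀ s > 0, Q s < 1 / ((n - 2 : ℝ) * α) := by
  have hn3 : (3 : ℝ) ≤ n := by exact_mod_cast hn
  have hn1 : (0 : ℝ) < n - 1 := by linarith
  have hn2 : (0 : ℝ) < n - 2 := by linarith
  have hα0 : 0 < α := by rw [hα]; exact one_div_pos.mpr (Real.sqrt_pos.mpr hn1)
  have hα2 : α ^ 2 * (n - 1) = 1 := by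
    rw [hα, div_pow, one_pow, Real.sq_sqrt hn1.le, one_div_mul_cancel hn1.ne']
  have hα2le : α ^ 2 ≤ 1 := by nlinarith
  have hB : 0 < 1 / ((n - 2 : ℝ) * α) := by positivity
  have hBα := one_div_mul_one_sub_sq hα2 (by linarith)
  exact lt_of_tendsto_nhdsGT_of_hasDerivAt_neg hQ'
    (fun s hs hQs => sub_mul_sq_add_one_sub_sq_neg hB hBα hα2le hQs (hX s hs).2.ne) hlim
end

section
/- Let α ∈ (0,1) and let X, Y : (0,∞) → ℝ solve dX/ds = X³ − X + αY², dY/ds = Y(X² − αX) with 0 < X < α and Y > 0. If Q = X/Y² satisfies Q(s) ≥ 1/((n−2)α) at some point s₀ (where α = 1/√(n−1), n ≥ 3) and X(s₀) < α, then Q'(s₀) < 0. -/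
/-!
Along the system, `Q = X / Y²` satisfies `Q' = α - Q ((X - α)² + 1 - α²)`, and for
`α = 1 / √(n - 1)` one has `1 - α² = (n - 2) α²`. Hence `Q ≥ 1 / ((n - 2) α)` gives
`Q' ≤ -(X - α)² / ((n - 2) α)`, which is negative as soon as `X ≠ α`.
-/

theorem hasDerivAt_div_sq_of_system {X Y : ℝ → ℝ} {α s : ℝ}
    (hX : HasDerivAt X (X s ^ 3 - X s + α * Y s ^ 2) s)
    (hY : HasDerivAt Y (Y s * (X s ^ 2 - α * X s)) s) (hY0 : Y s ≠ 0) :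
    HasDerivAt (fun t => X t / Y t ^ 2)
      (α - X s / Y s ^ 2 * ((X s - α) ^ 2 + 1 - α ^ 2)) s := by
  refine (hX.div (hY.pow 2) (pow_ne_zero 2 hY0)).congr_deriv ?_
  rw [Pi.pow_apply]
  field_simp
  ring

theorem pos_and_one_sub_sq_of_eq_one_div_sqrt {n α : ℝ} (hn : 1 < n)
    (hα : α = 1 / Real.sqrt (n - 1)) : 0 < α ∧ 1 - α ^ 2 = (n - 2) * α ^ 2 := by
  have hα2 : α ^ 2 = 1 / (n - 1) := by
    rw [hα, div_pow, one_pow, Real.sq_sqrt (by linarith)]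
  have hsqrt : 0 < Real.sqrt (n - 1) := Real.sqrt_pos.2 (sub_pos.2 hn)
  refine ⟨by rw [hα]; positivity, ?_⟩
  rw [hα2]
  field_simp [(sub_pos.2 hn).ne']
  ring

theorem sub_mul_sq_add_lt_zero {k α q x : ℝ} (hk : 0 < k) (hα : 0 < α)
    (hq : 1 / (k * α) ≤ q) (hx : x ≠ α) : α - q * ((x - α) ^ 2 + k * α ^ 2) < 0 := by
  have hsq : 0 < (x - α) ^ 2 := by positivity [sub_ne_zero.2 hx]
  calc α - q * ((x - α) ^ 2 + k * α ^ 2)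
      ≤ α - 1 / (k * α) * ((x - α) ^ 2 + k * α ^ 2) := by gcongr
    _ = -((x - α) ^ 2 / (k * α)) := by field_simp; ring
    _ < 0 := neg_neg_of_pos (by positivity)

theorem bryant_Q_decreasing_at_barrier_general (n : ℕ) (hn : 3 ≤ n) (α : ℝ)
    (hα : α = 1 / Real.sqrt (n - 1 : ℝ))
    (X Y : ℝ → ℝ) (hY : ∀ s > 0, 0 < Y s)
    (hX' : ∀ s > 0, HasDerivAt X (X s ^ 3 - X s + α * Y s ^ 2) s)
    (hY' : ∀ s > 0, HasDerivAt Y (Y s * (X s ^ 2 - α * X s)) s)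
    (s₀ : ℝ) (hs₀ : 0 < s₀)
    (hQge : X s₀ / Y s₀ ^ 2 ≥ 1 / ((n - 2 : ℝ) * α))
    (hXlt : X s₀ < α) :
    deriv (fun s => X s / Y s ^ 2) s₀ < 0 := by
  have hn' : (3 : ℝ) ≤ n := by exact_mod_cast hn
  obtain ⟨hα0, hα_sq⟩ := pos_and_one_sub_sq_of_eq_one_div_sqrt (by linarith) hα
  rw [(hasDerivAt_div_sq_of_system (hX' s₀ hs₀) (hY' s₀ hs₀) (hY s₀ hs₀).ne').deriv,
    add_sub_assoc, hα_sq]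
  exact sub_mul_sq_add_lt_zero (by linarith) hα0 hQge hXlt.ne

/-- At a point where Q = X/Y² reaches 1/((n−2)α) with X < α, Q is strictly decreasing. -/
theorem bryant_Q_decreasing_at_barrier (n : ℕ) (hn : 3 ≤ n) (α : ℝ)
    (hα : α = 1 / Real.sqrt (n - 1 : ℝ)) (hα01 : 0 < α ∧ α < 1)
    (X Y : ℝ → ℝ) (hX : ∀ s > 0, 0 < X s ∧ X s < α) (hY : ∀ s > 0, 0 < Y s)
    (hX' : ∀ s > 0, HasDerivAt X (X s ^ 3 - X s + α * Y s ^ 2) s)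
    (hY' : ∀ s > 0, HasDerivAt Y (Y s * (X s ^ 2 - α * X s)) s)
    (s₀ : ℝ) (hs₀ : 0 < s₀)
    (hQge : X s₀ / Y s₀ ^ 2 ≥ 1 / ((n - 2 : ℝ) * α))
    (hXlt : X s₀ < α) :
    deriv (fun s => X s / Y s ^ 2) s₀ < 0 :=
  bryant_Q_decreasing_at_barrier_general n hn α hα X Y hY hX' hY' s₀ hs₀ hQge hXlt
end
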